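/- Let q, k, l be natural numbers. Let A be a skew-symmetric (2k)×(2k) real matrix, C a skew-symmetric (2l)×(2l) real matrix, E a skew-symmetric q×q real matrix, B an arbitrary (2k)×q real matrix, D an arbitrary (2l)×q real matrix, and P an arbitrary q×q real matrix. Let M be the square real matrix of size q+2k+2l+q given in block form (with row/column blocks of sizes q, 2k, 2l, q) by M = [[0,0,0,P],[0,A,0,B],[0,0,C,D],[-Pᵀ,-Bᵀ,-Dᵀ,E]]. Then det M = (det P)² · det A · det C. -/
import Mathlib


open Matrix

/-- General form of the block determinant identity: with pairing block `P`,
`det M = (det P)^2 * det A * det C`. -/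
theorem stmt_1 (q k l : ℕ)
    (A : Matrix (Fin (2 * k)) (Fin (2 * k)) ℝ) (hA : Aᵀ = -A)
    (C : Matrix (Fin (2 * l)) (Fin (2 * l)) ℝ) (hC : Cᵀ = -C)
    (E : Matrix (Fin q) (Fin q) ℝ) (hE : Eᵀ = -E)
    (B : Matrix (Fin (2 * k)) (Fin q) ℝ)
    (D : Matrix (Fin (2 * l)) (Fin q) ℝ)
    (P : Matrix (Fin q) (Fin q) ℝ)
    (M : Matrix ((Fin q ⊕ Fin (2 * k)) ⊕ (Fin (2 * l) ⊕ Fin q))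
                ((Fin q ⊕ Fin (2 * k)) ⊕ (Fin (2 * l) ⊕ Fin q)) ℝ)
    (hM : M = Matrix.fromBlocks
      (Matrix.fromBlocks 0 0 0 A)
      (Matrix.fromBlocks 0 P 0 B)
      (Matrix.fromBlocks 0 0 (-Pᵀ) (-Bᵀ))
      (Matrix.fromBlocks C D (-Dᵀ) E)) :
    M.det = P.det ^ 2 * A.det * C.det := by
  classical
  -- the "corner" matrices with a single identity block
  set K : Matrix (Fin q ⊕ Fin (2 * k)) (Fin (2 * l) ⊕ Fin q) ℝ :=
    Matrix.fromBlocks 0 1 0 0 with hK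
  set K' : Matrix (Fin (2 * l) ⊕ Fin q) (Fin q ⊕ Fin (2 * k)) ℝ :=
    Matrix.fromBlocks 0 0 1 0 with hK'
  set U : Matrix ((Fin q ⊕ Fin (2 * k)) ⊕ (Fin (2 * l) ⊕ Fin q))
                 ((Fin q ⊕ Fin (2 * k)) ⊕ (Fin (2 * l) ⊕ Fin q)) ℝ :=
    Matrix.fromBlocks 1 (-K) 0 1 with hU
  set L : Matrix ((Fin q ⊕ Fin (2 * k)) ⊕ (Fin (2 * l) ⊕ Fin q))
                 ((Fin q ⊕ Fin (2 * k)) ⊕ (Fin (2 * l) ⊕ Fin q)) ℝ :=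
    Matrix.fromBlocks 1 0 K' 1 with hL
  have hMUL : M * U * L * U =
      Matrix.fromBlocks
        (Matrix.fromBlocks P 0 B A) 0
        (Matrix.fromBlocks D 0 E (-Bᵀ)) (Matrix.fromBlocks C 0 (-Dᵀ) Pᵀ) := by
    subst hM
    simp only [hU, hL, hK, hK', Matrix.fromBlocks_multiply, Matrix.mul_one,
      Matrix.mul_zero, Matrix.zero_mul, Matrix.one_mul, Matrix.mul_neg,
      Matrix.neg_mul, add_zero, zero_add, neg_zero, neg_neg,
      Matrix.fromBlocks_add, Matrix.fromBlocks_neg]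
    simp [Matrix.fromBlocks_multiply, Matrix.fromBlocks_add]
  have hdetU : U.det = 1 := by
    rw [hU, Matrix.det_fromBlocks_zero₂₁, Matrix.det_one, Matrix.det_one, mul_one]
  have hdetL : L.det = 1 := by
    rw [hL, Matrix.det_fromBlocks_zero₁₂, Matrix.det_one, Matrix.det_one, mul_one]
  have : (M * U * L * U).det = M.det := by
    rw [Matrix.det_mul, Matrix.det_mul, Matrix.det_mul, hdetU, hdetL, mul_one,
      mul_one, mul_one]
  rw [← this, hMUL, Matrix.det_fromBlocks_zero₁₂,
    Matrix.det_fromBlocks_zero₁₂, Matrix.det_fromBlocks_zero₁₂,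
    Matrix.det_transpose]
  ring
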